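/- Let u : (a,b) → ℝ be a C² radially symmetric function on the annulus {a < |x| < b} ⊂ ℝ² with λ(A^u) ∈ closure(Γ₂) at every point, where Γ₂ = {λ₁ > 0, λ₂ > 0}. Then u'(r) ≤ 0 and (u(r) + 4·ln r)' ≥ 0 for all r ∈ (a,b); in particular, for a < c < d < b, 0 ≤ u(c) - u(d) ≤ 4(ln d - ln c). -/

import Mathlib

/-- First eigenvalue of A^u for a radially symmetric function u(r). -/
noncomputable def lam1 (u : ℝ → ℝ) (r : ℝ) : ℝ :=
  (1 / (4 * Real.exp (u r))) * ((deriv u r) ^ 2 - 4 * deriv (deriv u) r)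

/-- Second eigenvalue of A^u for a radially symmetric function u(r). -/
noncomputable def lam2 (u : ℝ → ℝ) (r : ℝ) : ℝ :=
  -(1 / (4 * Real.exp (u r) * r)) * (deriv u r) * (4 + r * deriv u r)

def GammaP (p : ℝ) : Set (ℝ × ℝ) := {l | l.2 > (p - 2) * l.1 ∧ l.1 > (p - 2) * l.2}

/-! Since `r > 0`, `λ₂ ≥ 0` says `u' (4 + r u') ≤ 0`, which forces `u' ≤ 0 ≤ 4 + r u' = r (u + 4 log r)'`.
By the mean value theorem `u` is antitone and `u + 4 log` is monotone, which gives both bounds on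
`u c - u d`. -/

open Set Real

lemma nonpos_and_add_mul_nonneg_of_mul_add_mul_nonpos {c r x : ℝ} (hc : 0 ≤ c) (hr : 0 < r)
    (h : x * (c + r * x) ≤ 0) : x ≤ 0 ∧ 0 ≤ c + r * x := by
  constructor
  · by_contra! hx
    linarith [mul_pos hx (by positivity : 0 < c + r * x)]
  · by_contra! hy
    have hx : x < 0 := by nlinarith
    linarith [mul_pos_of_neg_of_neg hx hy]

lemma deriv_mul_nonpos_of_lam2_nonneg {u : ℝ → ℝ} {r : ℝ} (hr : 0 < r) (h : 0 ≤ lam2 u r) :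
    deriv u r * (4 + r * deriv u r) ≤ 0 := by
  have hc : 0 < 1 / (4 * exp (u r) * r) := by positivity
  have hlam : lam2 u r = -(1 / (4 * exp (u r) * r) * (deriv u r * (4 + r * deriv u r))) := by
    rw [lam2]; ring
  rw [hlam, neg_nonneg] at h
  exact nonpos_of_mul_nonpos_right h hc

lemma hasDerivAt_add_four_mul_log {u : ℝ → ℝ} {u' r : ℝ} (hu : HasDerivAt u u' r) (hr : r ≠ 0) :
    HasDerivAt (fun s => u s + 4 * log s) (u' + 4 * r⁻¹) r :=
  hu.add ((hasDerivAt_log hr).const_mul 4)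

lemma deriv_nonpos_and_deriv_add_four_mul_log_nonneg {u : ℝ → ℝ} {r : ℝ} (hr : 0 < r)
    (hu : DifferentiableAt ℝ u r) (h : 0 ≤ lam2 u r) :
    deriv u r ≤ 0 ∧ 0 ≤ deriv (fun s => u s + 4 * log s) r := by
  obtain ⟨hu', hlog'⟩ := nonpos_and_add_mul_nonneg_of_mul_add_mul_nonpos (by norm_num) hr
    (deriv_mul_nonpos_of_lam2_nonneg hr h)
  refine ⟨hu', ?_⟩
  rw [(hasDerivAt_add_four_mul_log hu.hasDerivAt hr.ne').deriv]
  have hsum : deriv u r + 4 * r⁻¹ = (4 + r * deriv u r) / r := by field_simp; ring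
  exact hsum ▸ div_nonneg hlog' hr.le

theorem stmt8 (a b : ℝ) (ha : 0 ≤ a) (u : ℝ → ℝ)
    (hu : ContDiffOn ℝ 2 u (Set.Ioo a b))
    (h : ∀ r ∈ Set.Ioo a b, 0 ≤ lam1 u r ∧ 0 ≤ lam2 u r) :
    (∀ r ∈ Set.Ioo a b, deriv u r ≤ 0 ∧ 0 ≤ deriv (fun s => u s + 4 * Real.log s) r) ∧
    ∀ c d : ℝ, a < c → c < d → d < b →
      0 ≤ u c - u d ∧ u c - u d ≤ 4 * (Real.log d - Real.log c) := by
  have hpos : ∀ r ∈ Ioo a b, 0 < r := fun r hr => ha.trans_lt hr.1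
  have hdiff : DifferentiableOn ℝ u (Ioo a b) := hu.differentiableOn (by norm_num)
  have hderiv : ∀ r ∈ Ioo a b, deriv u r ≤ 0 ∧ 0 ≤ deriv (fun s => u s + 4 * log s) r :=
    fun r hr => deriv_nonpos_and_deriv_add_four_mul_log_nonneg (hpos r hr)
      (hdiff.differentiableAt (isOpen_Ioo.mem_nhds hr)) (h r hr).2
  have hdiff_log : DifferentiableOn ℝ (fun s => u s + 4 * log s) (Ioo a b) :=
    hdiff.add ((differentiableOn_log.mono fun r hr => (hpos r hr).ne').const_mul 4)
  have hanti : AntitoneOn u (Ioo a b) :=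
    antitoneOn_of_deriv_nonpos (convex_Ioo a b) hdiff.continuousOn
      (by rwa [interior_Ioo]) (by simpa only [interior_Ioo] using fun r hr => (hderiv r hr).1)
  have hmono : MonotoneOn (fun s => u s + 4 * log s) (Ioo a b) :=
    monotoneOn_of_deriv_nonneg (convex_Ioo a b) hdiff_log.continuousOn
      (by rwa [interior_Ioo]) (by simpa only [interior_Ioo] using fun r hr => (hderiv r hr).2)
  refine ⟨hderiv, fun c d hac hcd hdb => ?_⟩
  have hc : c ∈ Ioo a b := ⟨hac, hcd.trans hdb⟩
  have hd : d ∈ Ioo a b := ⟨hac.trans hcd, hdb⟩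
  have hud := hanti hc hd hcd.le
  have hlogd := hmono hc hd hcd.le
  constructor <;> linarith
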